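/- Let G be a cyclic group and {A, B, C} a rainbow-free 3-coloring of G with A = {0} and B, C nonempty, and suppose |B + C| = |B| + |C| − 1 (so G \ (B + C) = {0, x} for some x ≠ 0). Then −B = B, −C = C, and ({0, x} + B) ⊆ G \ C, hence |{0, x} + B| ≤ |B| + 1. -/

import Mathlib

/-!
A rainbow-free coloring with `A = {0}` forces `B` and `C` to be symmetric: if `b ∈ B` and
`-b ∈ C`, then `(b, 0, -b)` is a rainbow progression. Symmetry of `B` turns `x + b ∈ C` into
`x = -b + (x + b) ∈ B + C`, so `{0, x} + B` avoids `C`, i.e. lies in `{0} ∪ B`.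
-/

open Pointwise

/-- A 3-coloring with classes `A`, `B`, `C` is rainbow-free if no 3-term
arithmetic progression `(x, y, z)` (i.e. `x + z = 2 • y`) has its members in
three pairwise distinct color classes. -/
def RainbowFree {G : Type*} [AddCommGroup G] (A B C : Set G) : Prop :=
  ∀ x y z : G, x + z = 2 • y →
    ¬ ((x ∈ A ∧ y ∈ B ∧ z ∈ C) ∨ (x ∈ A ∧ y ∈ C ∧ z ∈ B) ∨
       (x ∈ B ∧ y ∈ A ∧ z ∈ C) ∨ (x ∈ B ∧ y ∈ C ∧ z ∈ A) ∨
       (x ∈ C ∧ y ∈ A ∧ z ∈ B) ∨ (x ∈ C ∧ y ∈ B ∧ z ∈ A))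

namespace RainbowFree

variable {G : Type*} [AddCommGroup G] {A B C : Set G}

theorem swap (h : RainbowFree A B C) : RainbowFree A C B :=
  fun x y z hxz hrainbow => h x y z hxz (by tauto)

theorem neg_notMem (h : RainbowFree A B C) (h0 : (0 : G) ∈ A) {b : G} (hb : b ∈ B) :
    -b ∉ C :=
  fun hc => h b 0 (-b) (by simp) (Or.inr (Or.inr (Or.inl ⟨hb, h0, hc⟩)))

theorem neg_mem (h : RainbowFree A B C) (hA : A = {0}) (hcover : A ∪ B ∪ C = Set.univ)
    (hAB : Disjoint A B) {b : G} (hb : b ∈ B) : -b ∈ B := by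
  have h0 : (0 : G) ∈ A := hA ▸ rfl
  have hb0 : b ≠ 0 := fun hb0 => hAB.notMem_of_mem_left h0 (hb0 ▸ hb)
  have hcov : -b ∈ A ∪ B ∪ C := hcover ▸ Set.mem_univ _
  rcases hcov with (hA' | hB') | hC'
  · rw [hA, Set.mem_singleton_iff, neg_eq_zero] at hA'
    exact absurd hA' hb0
  · exact hB'
  · exact absurd hC' (h.neg_notMem h0 hb)

theorem neg_eq (h : RainbowFree A B C) (hA : A = {0}) (hcover : A ∪ B ∪ C = Set.univ)
    (hAB : Disjoint A B) : -B = B := by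
  have hsub : B ⊆ -B := fun b hb => Set.mem_neg.mpr (h.neg_mem hA hcover hAB hb)
  exact (Set.neg_subset.mpr hsub).antisymm hsub

end RainbowFree

theorem pair_add_subset_compl {G : Type*} [AddCommGroup G] {B C : Set G} {x : G}
    (hB : -B = B) (hBC : Disjoint B C) (hx : x ∉ B + C) : ({0, x} : Set G) + B ⊆ Cᶜ := by
  intro y hy hc
  obtain ⟨u, hu | hu, b, hb, rfl⟩ := Set.mem_add.mp hy
  · rw [hu, zero_add] at hc
    exact hBC.notMem_of_mem_left hb hc
  · rw [hu] at hc
    exact hx ⟨-b, hB ▸ Set.neg_mem_neg.mpr hb, x + b, hc, neg_add_cancel_comm_assoc b x⟩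

theorem structure_of_near_full_sumset_general {G : Type*} [AddCommGroup G] [Fintype G]
    (A B C : Set G)
    (hcover : A ∪ B ∪ C = Set.univ)
    (hAB : Disjoint A B) (hAC : Disjoint A C) (hBC : Disjoint B C)
    (hrf : RainbowFree A B C) (hA : A = {0})
    (x : G)
    (hmiss : Set.univ \ (B + C) = {0, x}) :
    -B = B ∧ -C = C ∧ (({0, x} : Set G) + B) ⊆ Set.univ \ C ∧
    (({0, x} : Set G) + B).ncard ≤ B.ncard + 1 := by
  have hB : -B = B := hrf.neg_eq hA hcover hAB
  have hC : -C = C := hrf.swap.neg_eq hA (by rwa [Set.union_right_comm]) hAC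
  have hx : x ∉ B + C := by
    have hxmiss : x ∈ Set.univ \ (B + C) := hmiss ▸ Or.inr rfl
    exact hxmiss.2
  have hsub : ({0, x} : Set G) + B ⊆ Cᶜ := pair_add_subset_compl hB hBC hx
  have hcompl : Cᶜ ⊆ insert 0 B := by
    rw [Set.insert_eq, ← hA, Set.compl_subset_iff_union, Set.union_comm, hcover]
  refine ⟨hB, hC, Set.compl_eq_univ_sdiff C ▸ hsub, ?_⟩
  calc (({0, x} : Set G) + B).ncard ≤ (insert 0 B).ncard :=
        Set.ncard_le_ncard (hsub.trans hcompl) (Set.toFinite _)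
    _ ≤ B.ncard + 1 := Set.ncard_insert_le 0 B

theorem structure_of_near_full_sumset {G : Type*} [AddCommGroup G] [Fintype G]
    [IsAddCyclic G] (A B C : Set G)
    (hcover : A ∪ B ∪ C = Set.univ)
    (hAB : Disjoint A B) (hAC : Disjoint A C) (hBC : Disjoint B C)
    (hBne : B.Nonempty) (hCne : C.Nonempty)
    (hrf : RainbowFree A B C) (hA : A = {0})
    (hcard : (B + C).ncard = B.ncard + C.ncard - 1)
    (x : G) (hx : x ≠ 0)
    (hmiss : Set.univ \ (B + C) = {0, x}) :
    -B = B ∧ -C = C ∧ (({0, x} : Set G) + B) ⊆ Set.univ \ C ∧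
    (({0, x} : Set G) + B).ncard ≤ B.ncard + 1 :=
  structure_of_near_full_sumset_general A B C hcover hAB hAC hBC hrf hA x hmiss
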